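/- arXiv:2008.02571 — 4 statements merged into one kernel-verified Lean document; each statement's English description precedes it below -/
import Mathlib

section
/- Let Λ = ℤ_p⟦T⟧ be the power series ring in one variable T over the p-adic integers ℤ_p, and let X be a finitely generated Λ-module satisfying: (1) the T-torsion submodule X[T] = {x ∈ X : T·x = 0} is zero, and (2) the quotient X/TX is a free ℤ_p-module of rank r. Then X is a free Λ-module of rank r. -/
/-!
Lift an `ℤ_p`-basis of `X/TX` to `x₁, …, x_r ∈ X` and let `φ : Λʳ → X` send `k` to `∑ kᵢ xᵢ`.
As `T` lies in the Jacobson radical of `Λ`, Nakayama's lemma makes `φ` surjective. If `φ k = 0`,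
reducing modulo `T` gives `k = T d`; then `T • φ d = 0`, so `φ d = 0` because `X[T] = 0`.
Hence every element of `ker φ` is divisible by all powers of `T`, and so vanishes.
-/

open PowerSeries

section AdicInjectivity

variable {R F M : Type*} [CommRing R] [AddCommGroup F] [Module R F] [AddCommGroup M] [Module R M]
  {t : R} {φ : F →ₗ[R] M}

theorem LinearMap.exists_eq_pow_smul_of_map_eq_zero (ht : IsSMulRegular M t)
    (hlift : ∀ k m, φ k = t • m → ∃ d, k = t • d) (n : ℕ) {k : F} (hk : φ k = 0) :
    ∃ d, φ d = 0 ∧ k = t ^ n • d := by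
  induction n generalizing k with
  | zero => exact ⟨k, hk, by rw [pow_zero, one_smul]⟩
  | succ n ih =>
    obtain ⟨d, rfl⟩ := hlift k 0 (by rw [hk, smul_zero])
    have hd : φ d = 0 := ht.right_eq_zero_of_smul (by rwa [← map_smul])
    obtain ⟨e, he, rfl⟩ := ih hd
    exact ⟨e, he, by rw [smul_smul, pow_succ']⟩

theorem LinearMap.injective_of_isSMulRegular (ht : IsSMulRegular M t)
    (hlift : ∀ k m, φ k = t • m → ∃ d, k = t • d)
    (hsep : ∀ k : F, (∀ n : ℕ, ∃ d, k = t ^ n • d) → k = 0) :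
    Function.Injective φ := by
  rw [← LinearMap.ker_eq_bot, LinearMap.ker_eq_bot']
  exact fun k hk ↦ hsep k fun n ↦
    (exists_eq_pow_smul_of_map_eq_zero ht hlift n hk).imp fun _ ↦ And.right

end AdicInjectivity

namespace PowerSeries

variable {R : Type*} [CommRing R]

theorem X_mem_jacobson_bot : (X : R⟦X⟧) ∈ (⊥ : Ideal R⟦X⟧).jacobson :=
  Ideal.mem_jacobson_bot.mpr fun y ↦ by simp [isUnit_iff_constantCoeff]

theorem eq_zero_of_forall_X_pow_dvd {f : R⟦X⟧} (h : ∀ n, X ^ n ∣ f) : f = 0 := by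
  ext n
  simpa using X_pow_dvd_iff.mp (h (n + 1)) n n.lt_succ_self

variable {ι M : Type*} [Fintype ι] [AddCommGroup M] [Module R M] [Module R⟦X⟧ M]
  [IsScalarTower R R⟦X⟧ M]

theorem mkQ_C_smul (P : Submodule R⟦X⟧ M) (c : R) (m : M) : P.mkQ (C c • m) = c • P.mkQ m := by
  rw [C_eq_algebraMap, algebraMap_smul, Submodule.mkQ_apply, Submodule.Quotient.mk_smul]; rfl

theorem span_range_eq_top_of_span_mkQ [Module.Finite R⟦X⟧ M] {x : ι → M}
    (hx : Submodule.span R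
      (Set.range fun i ↦ (Ideal.span {(X : R⟦X⟧)} • ⊤ : Submodule R⟦X⟧ M).mkQ (x i)) = ⊤) :
    Submodule.span R⟦X⟧ (Set.range x) = ⊤ := by
  set N : Submodule R⟦X⟧ M := Ideal.span {(X : R⟦X⟧)} • ⊤
  refine top_le_iff.mp (Submodule.le_of_le_smul_of_le_jacobson_bot Module.Finite.fg_top
    ((Ideal.span_singleton_le_iff_mem _).mpr X_mem_jacobson_bot) fun y _ ↦ ?_)
  obtain ⟨c, hc⟩ :=
    (Submodule.mem_span_range_iff_exists_fun R).mp (hx ▸ Submodule.mem_top (x := N.mkQ y))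
  have hy : y - ∑ i, C (c i) • x i ∈ N := by
    rw [← Submodule.Quotient.eq, ← Submodule.mkQ_apply, ← Submodule.mkQ_apply, map_sum]
    simp only [mkQ_C_smul, hc]
  rw [← sub_add_cancel y (∑ i, C (c i) • x i)]
  exact add_mem (Submodule.mem_sup_right hy) (Submodule.mem_sup_left (Submodule.sum_mem _
    fun i _ ↦ Submodule.smul_mem _ _ (Submodule.subset_span ⟨i, rfl⟩)))

theorem X_dvd_of_sum_smul_mem {x : ι → M}
    (hx : LinearIndependent R fun i ↦ (Ideal.span {(X : R⟦X⟧)} • ⊤ : Submodule R⟦X⟧ M).mkQ (x i))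
    {k : ι → R⟦X⟧} (hk : ∑ i, k i • x i ∈ (Ideal.span {(X : R⟦X⟧)} • ⊤ : Submodule R⟦X⟧ M)) (i : ι) :
    X ∣ k i := by
  set N : Submodule R⟦X⟧ M := Ideal.span {(X : R⟦X⟧)} • ⊤
  set c : ι → R := fun i ↦ constantCoeff (k i)
  set d : ι → R⟦X⟧ := fun i ↦ mk fun n ↦ coeff (n + 1) (k i)
  have hsplit : ∑ i, k i • x i = ∑ i, C (c i) • x i + (X : R⟦X⟧) • ∑ i, d i • x i := by
    rw [Finset.smul_sum, ← Finset.sum_add_distrib]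
    refine Finset.sum_congr rfl fun i _ ↦ ?_
    rw [smul_smul, ← add_smul, add_comm, ← eq_X_mul_shift_add_const]
  have hXN : (X : R⟦X⟧) • ∑ i, d i • x i ∈ N :=
    Submodule.smul_mem_smul (Ideal.mem_span_singleton_self X) Submodule.mem_top
  have hc : ∑ i, c i • N.mkQ (x i) = 0 := by
    rw [hsplit, Submodule.add_mem_iff_left N hXN, ← Submodule.Quotient.mk_eq_zero,
      ← Submodule.mkQ_apply, map_sum] at hk
    simpa only [mkQ_C_smul] using hk
  exact X_dvd_iff.mpr (Fintype.linearIndependent_iff.mp hx c hc i)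

theorem bijective_linearCombination_of_basis [Module.Finite R⟦X⟧ M]
    (htors : IsSMulRegular M (X : R⟦X⟧))
    (b : Module.Basis ι R (M ⧸ (Ideal.span {(X : R⟦X⟧)} • ⊤ : Submodule R⟦X⟧ M))) {x : ι → M}
    (hx : ∀ i, Submodule.Quotient.mk (x i) = b i) :
    Function.Bijective (Fintype.linearCombination R⟦X⟧ x) := by
  have hxb : (fun i ↦ (Ideal.span {(X : R⟦X⟧)} • ⊤ : Submodule R⟦X⟧ M).mkQ (x i)) = b := funext hx
  refine ⟨LinearMap.injective_of_isSMulRegular htors (fun k m hkm ↦ ?_) fun k hk ↦ ?_, ?_⟩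
  · have hdvd := X_dvd_of_sum_smul_mem (hxb ▸ b.linearIndependent) (k := k) (by
      rw [← Fintype.linearCombination_apply, hkm]
      exact Submodule.smul_mem_smul (Ideal.mem_span_singleton_self X) Submodule.mem_top)
    choose d hd using hdvd
    exact ⟨d, funext hd⟩
  · funext i
    exact eq_zero_of_forall_X_pow_dvd fun n ↦
      let ⟨d, hd⟩ := hk n
      ⟨d i, by rw [hd]; rfl⟩
  · rw [← LinearMap.range_eq_top, Fintype.range_linearCombination]
    exact span_range_eq_top_of_span_mkQ (hxb ▸ b.span_eq)

end PowerSeries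

/-- **Lemma 1.1.2 (commutative algebra lemma).**
Let `Λ = ℤ_p⟦T⟧` and let `X` be a finitely generated `Λ`-module such that
`X[T] = 0` and `X/TX` is a free `ℤ_p`-module of rank `r`. Then `X` is a free
`Λ`-module of rank `r`. -/
theorem free_of_T_torsion_free_and_quotient_free
    (p : ℕ) [Fact p.Prime] (r : ℕ)
    (X : Type*) [AddCommGroup X]
    [Module ℤ_[p] X] [Module (PowerSeries ℤ_[p]) X]
    [IsScalarTower ℤ_[p] (PowerSeries ℤ_[p]) X]
    [Module.Finite (PowerSeries ℤ_[p]) X]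
    (htors : ∀ x : X, (PowerSeries.X : PowerSeries ℤ_[p]) • x = 0 → x = 0)
    (hfree : Nonempty
      ((X ⧸ (Ideal.span {(PowerSeries.X : PowerSeries ℤ_[p])} •
        (⊤ : Submodule (PowerSeries ℤ_[p]) X))) ≃ₗ[ℤ_[p]] (Fin r → ℤ_[p]))) :
    Nonempty (X ≃ₗ[PowerSeries ℤ_[p]] (Fin r → PowerSeries ℤ_[p])) := by
  obtain ⟨e⟩ := hfree
  let b := Module.Basis.ofEquivFun e
  choose x hx using fun i ↦ Submodule.Quotient.mk_surjective _ (b i)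
  have hbij := PowerSeries.bijective_linearCombination_of_basis
    (IsSMulRegular.of_right_eq_zero_of_smul htors) b hx
  exact ⟨(LinearEquiv.ofBijective _ hbij).symm⟩
end

section
/- Given the short exact sequence (1): 0 → X → R/𝔪^k ⊕ M → R/𝔪^{k−a} ⊕ R/𝔪^{b} → 0 of finitely generated torsion R-modules with k > exp(M) + 2a, one has b ≤ exp(M). -/
/-!
Let `e = exp(M)`, `N = R/𝔪^{k-a} ⊕ R/𝔪^b`, and suppose `b > e`. As `π^e` kills `M`, the surjection
`R/𝔪^k ⊕ M → N` shows that every element of `π^e N` is a multiple of `π^e z`, where `z = (x, y)`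
is the image of `(1, 0)`. Writing `π^e (1, 0) = π^e c₁ z`, `π^e (0, 1) = π^e c₂ z` and cancelling
`π^e` (possible because `k - a > e` and `b > e`) gives `c₁ x ≡ 1`, `c₁ y ≡ 0`, `c₂ y ≡ 1` modulo
`π`, hence `1 ≡ (c₁ x)(c₂ y) = (c₁ y)(c₂ x) ≡ 0`.
-/

/-- For a module `M` over a ring `R` with distinguished element `π`,
`modExp π M = exp(M) := min{n ≥ 0 : π^n M = 0}`. -/
noncomputable def modExp {R : Type*} [CommRing R] (π : R)
    (M : Type*) [AddCommGroup M] [Module R M] : ℕ :=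
  sInf {n : ℕ | ∀ x : M, π ^ n • x = 0}

theorem pow_modExp_smul_eq_zero {R M : Type*} [CommRing R] [AddCommGroup M] [Module R M] {π : R}
    (h : ∃ n : ℕ, ∀ x : M, π ^ n • x = 0) (x : M) : π ^ modExp π M • x = 0 :=
  Nat.sInf_mem h x

theorem IsDiscreteValuationRing.exists_pow_smul_eq_zero_of_isTorsion {R M : Type*} [CommRing R]
    [IsDomain R] [IsDiscreteValuationRing R] [AddCommGroup M] [Module R M] [Module.Finite R M]
    (hM : Module.IsTorsion R M) {π : R} (hπ : Irreducible π) :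
    ∃ n : ℕ, ∀ x : M, π ^ n • x = 0 := by
  obtain ⟨r, hr_ann, hr_nzd⟩ := Submodule.annihilator_top_inter_nonZeroDivisors hM
  obtain ⟨n, u, rfl⟩ := eq_unit_mul_pow_irreducible (nonZeroDivisors.ne_zero hr_nzd) hπ
  have hπn : π ^ n ∈ (⊤ : Submodule R M).annihilator := by
    simpa using Ideal.mul_mem_left _ (↑u⁻¹ : R) hr_ann
  exact ⟨n, fun x => Submodule.mem_annihilator.mp hπn x Submodule.mem_top⟩

theorem exists_smul_eq_smul_smul_of_surjective {R M N : Type*} [CommRing R] [AddCommGroup M]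
    [Module R M] [AddCommGroup N] [Module R N] {I : Ideal R} {g : (R ⧸ I) × M →ₗ[R] N}
    (hg : Function.Surjective g) {r : R} (hr : ∀ x : M, r • x = 0) (y : N) :
    ∃ c : R, r • y = r • c • g (1, 0) := by
  obtain ⟨⟨q, x⟩, rfl⟩ := hg y
  obtain ⟨c, rfl⟩ := Ideal.Quotient.mk_surjective q
  refine ⟨c, ?_⟩
  rw [← map_smul, ← map_smul, ← map_smul]
  congr 1
  ext
  · simp [Algebra.smul_def]
  · simp [hr]

theorem Ideal.Quotient.mk_eq_mk_iff_pow_dvd {R : Type*} [CommRing R] (π a b : R) (n : ℕ) :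
    Ideal.Quotient.mk (Ideal.span {π} ^ n) a = Ideal.Quotient.mk _ b ↔ π ^ n ∣ a - b := by
  rw [Ideal.Quotient.eq, Ideal.span_singleton_pow, Ideal.mem_span_singleton]

theorem dvd_of_pow_dvd_pow_mul {R : Type*} [CommRing R] [IsDomain R] {π t : R} (hπ : π ≠ 0)
    {e m : ℕ} (hem : e < m) (h : π ^ m ∣ π ^ e * t) : π ∣ t := by
  rw [← mul_dvd_mul_iff_left (pow_ne_zero e hπ), ← pow_succ]
  exact (pow_dvd_pow π hem).trans h

theorem Ideal.Quotient.dvd_sub_of_pow_smul_mk_eq {R : Type*} [CommRing R] [IsDomain R] {π : R}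
    (hπ : π ≠ 0) {e m : ℕ} (hem : e < m) {a b c : R}
    (h : π ^ e • mk (span {π} ^ m) a = π ^ e • c • mk _ b) : π ∣ a - c * b := by
  change mk _ (π ^ e * a) = mk _ (π ^ e * (c * b)) at h
  rw [mk_eq_mk_iff_pow_dvd, ← mul_sub] at h
  exact dvd_of_pow_dvd_pow_mul hπ hem h

theorem not_forall_exists_pow_smul_eq_pow_smul_smul {R : Type*} [CommRing R] [IsDomain R] {π : R}
    (hπ : Irreducible π) {e m n : ℕ} (hem : e < m) (hen : e < n)
    (z : (R ⧸ Ideal.span {π} ^ m) × (R ⧸ Ideal.span {π} ^ n)) :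
    ¬ ∀ y, ∃ c : R, π ^ e • y = π ^ e • c • z := by
  obtain ⟨zx, zy⟩ := z
  obtain ⟨x, rfl⟩ := Ideal.Quotient.mk_surjective zx
  obtain ⟨y, rfl⟩ := Ideal.Quotient.mk_surjective zy
  intro h
  obtain ⟨c₁, h₁⟩ := h (Ideal.Quotient.mk _ 1, Ideal.Quotient.mk _ 0)
  obtain ⟨c₂, h₂⟩ := h (Ideal.Quotient.mk _ 0, Ideal.Quotient.mk _ 1)
  simp only [Prod.smul_mk, Prod.mk.injEq] at h₁ h₂
  have d₁ := Ideal.Quotient.dvd_sub_of_pow_smul_mk_eq hπ.ne_zero hem h₁.1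
  have d₂ := Ideal.Quotient.dvd_sub_of_pow_smul_mk_eq hπ.ne_zero hen h₁.2
  have d₄ := Ideal.Quotient.dvd_sub_of_pow_smul_mk_eq hπ.ne_zero hen h₂.2
  have hπ_dvd_one : π ∣ 1 := by
    rw [show (1 : R) = (1 - c₁ * x) + c₁ * x * (1 - c₂ * y) - (0 - c₁ * y) * c₂ * x by ring]
    exact dvd_sub (dvd_add d₁ (d₄.mul_left _)) ((d₂.mul_right _).mul_right _)
  exact hπ.not_isUnit (isUnit_of_dvd_one hπ_dvd_one)

theorem dvr_ses_b_le_exp_general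
    (R : Type*) [CommRing R] [IsDomain R] [IsDiscreteValuationRing R]
    (π : R) (hπ : IsLocalRing.maximalIdeal R = Ideal.span {π})
    (M : Type*)
    [AddCommGroup M] [Module R M] [Module.Finite R M]
    (hMtor : Module.IsTorsion R M)
    (k a b : ℕ)
    -- the short exact sequence (1)
    (g₁ : (R ⧸ IsLocalRing.maximalIdeal R ^ k) × M →ₗ[R]
      (R ⧸ IsLocalRing.maximalIdeal R ^ (k - a)) × (R ⧸ IsLocalRing.maximalIdeal R ^ b))
    (hg₁ : Function.Surjective g₁)
    -- the numerical hypothesis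
    (hka : modExp π M + 2 * a < k) :
    b ≤ modExp π M := by
  have hπ_irr : Irreducible π := (IsDiscreteValuationRing.irreducible_iff_uniformizer π).mpr hπ
  have hkill : ∀ x : M, π ^ modExp π M • x = 0 := pow_modExp_smul_eq_zero
    (IsDiscreteValuationRing.exists_pow_smul_eq_zero_of_isTorsion hMtor hπ_irr)
  by_contra! hb
  generalize IsLocalRing.maximalIdeal R = I at g₁ hg₁ hπ
  subst hπ
  exact not_forall_exists_pow_smul_eq_pow_smul_smul hπ_irr (by omega) hb (g₁ (1, 0))
    (exists_smul_eq_smul_smul_of_surjective hg₁ hkill)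

/-- **Lemma 4.3.5(ii) (`lem:key`(ii)).**
Given the short exact sequence
`(1): 0 → X → R/𝔪^k ⊕ M → R/𝔪^{k−a} ⊕ R/𝔪^{b} → 0`
of finitely generated torsion `R`-modules with `k > exp(M) + 2a`,
one has `b ≤ exp(M)`. -/
theorem dvr_ses_b_le_exp
    (R : Type*) [CommRing R] [IsDomain R] [IsDiscreteValuationRing R]
    (π : R) (hπ : IsLocalRing.maximalIdeal R = Ideal.span {π})
    (X M : Type*)
    [AddCommGroup X] [Module R X] [Module.Finite R X]
    [AddCommGroup M] [Module R M] [Module.Finite R M]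
    (hXtor : Module.IsTorsion R X) (hMtor : Module.IsTorsion R M)
    (k a b : ℕ) (hk : 0 < k)
    -- the short exact sequence (1)
    (f₁ : X →ₗ[R] (R ⧸ IsLocalRing.maximalIdeal R ^ k) × M)
    (g₁ : (R ⧸ IsLocalRing.maximalIdeal R ^ k) × M →ₗ[R]
      (R ⧸ IsLocalRing.maximalIdeal R ^ (k - a)) × (R ⧸ IsLocalRing.maximalIdeal R ^ b))
    (hf₁ : Function.Injective f₁) (hg₁ : Function.Surjective g₁)
    (hfg₁ : Function.Exact f₁ g₁)
    -- the numerical hypothesis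
    (hka : modExp π M + 2 * a < k) :
    b ≤ modExp π M :=
  dvr_ses_b_le_exp_general R π hπ M hMtor k a b g₁ hg₁ hka
end

section
/- With the two short exact sequences (1): 0 → X → R/𝔪^k ⊕ M → R/𝔪^{k−a} ⊕ R/𝔪^{b} → 0 and (2): 0 → X → R/𝔪^k ⊕ M′ → R/𝔪^{a′} ⊕ R/𝔪^{k−b′} → 0 of finitely generated torsion R-modules satisfying k > exp(M) + 2a and a′ ≤ a, and with M ≅ M₀ ⊕ M₀ and M′ ≅ M₀′ ⊕ M₀′, there exists an injective R-module homomorphism X ↪ M′ ⊕ R/𝔪^{exp(X)}. -/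
open Module Submodule LinearMap

section SpanPow

variable {R : Type*} [CommRing R] (π : R)

def mulPowQuot (d : ℕ) {m n : ℕ} (h : d + m = n) :
    R ⧸ Ideal.span {π} ^ m →ₗ[R] R ⧸ Ideal.span {π} ^ n :=
  mapQ _ _ (mulLeft R (π ^ d)) fun r hr => by
    rw [Ideal.span_singleton_pow] at hr
    obtain ⟨s, rfl⟩ := Ideal.mem_span_singleton.mp hr
    rw [mem_comap, mulLeft_apply, Ideal.span_singleton_pow, Ideal.mem_span_singleton, ← h,
      pow_add]
    exact mul_dvd_mul_left _ (dvd_mul_right _ _)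

variable {π}

@[simp]
theorem mulPowQuot_mk (d : ℕ) {m n : ℕ} (h : d + m = n) (r : R) :
    mulPowQuot π d h (Submodule.Quotient.mk r) = Submodule.Quotient.mk (π ^ d * r) :=
  rfl

theorem quotient_mk_eq_zero_iff_pow_dvd {n : ℕ} (r : R) :
    (Submodule.Quotient.mk r : R ⧸ Ideal.span {π} ^ n) = 0 ↔ π ^ n ∣ r := by
  rw [Submodule.Quotient.mk_eq_zero, Ideal.span_singleton_pow, Ideal.mem_span_singleton]

variable [IsDomain R]

theorem mulPowQuot_injective (hπ : π ≠ 0) (d : ℕ) {m n : ℕ} (h : d + m = n) :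
    Function.Injective (mulPowQuot π d h) := by
  rw [← ker_eq_bot, ker_eq_bot']
  intro y hy
  obtain ⟨r, rfl⟩ := Submodule.Quotient.mk_surjective _ y
  rw [mulPowQuot_mk, quotient_mk_eq_zero_iff_pow_dvd, ← h, pow_add,
    mul_dvd_mul_iff_left (pow_ne_zero d hπ)] at hy
  exact (quotient_mk_eq_zero_iff_pow_dvd r).mpr hy

/-- `ψ` is `φ` followed by multiplication by `π ^ e` into `R ⧸ (π ^ (k + e))`, which lands in the
image of the injective multiplication by `π ^ k` from `R ⧸ (π ^ e)`; comparing inside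
`R ⧸ (π ^ (k + e))` avoids a case split on `e ≤ k`. -/
theorem exists_ker_eq_of_isTorsionBy_pow {I : Ideal R} (hI : I = Ideal.span {π}) (hπ : π ≠ 0)
    {X : Type*} [AddCommGroup X] [Module R X] {e k : ℕ} (hX : IsTorsionBy R X (π ^ e))
    (φ : X →ₗ[R] R ⧸ I ^ k) : ∃ ψ : X →ₗ[R] R ⧸ I ^ e, ker ψ = ker φ := by
  subst hI
  let μ := mulPowQuot π k (rfl : k + e = k + e)
  let ν := mulPowQuot π e (add_comm e k)
  have hrange : ∀ x, ν (φ x) ∈ range μ := by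
    intro x
    obtain ⟨r, hr⟩ := Submodule.Quotient.mk_surjective _ (φ x)
    have hφx : π ^ e • φ x = 0 := by rw [← map_smul, hX, map_zero]
    rw [← hr, ← Submodule.Quotient.mk_smul, smul_eq_mul, quotient_mk_eq_zero_iff_pow_dvd] at hφx
    obtain ⟨s, hs⟩ := hφx
    exact ⟨Submodule.Quotient.mk s, by rw [← hr, mulPowQuot_mk, mulPowQuot_mk, hs]⟩
  refine ⟨(LinearEquiv.ofInjective μ (mulPowQuot_injective hπ _ _)).symm.toLinearMap ∘ₗ
    (ν ∘ₗ φ).codRestrict _ hrange, ?_⟩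
  rw [LinearEquiv.ker_comp, ker_codRestrict,
    ker_comp_of_ker_eq_bot _ (ker_eq_bot.mpr (mulPowQuot_injective hπ _ _))]

end SpanPow

theorem exists_isTorsionBy_pow {R : Type*} [CommRing R] [IsDomain R] [IsDiscreteValuationRing R]
    {π : R} (hπ : Irreducible π) {X : Type*} [AddCommGroup X] [Module R X] [Module.Finite R X]
    (hX : IsTorsion R X) : ∃ n, IsTorsionBy R X (π ^ n) := by
  obtain ⟨a, ha, ha0⟩ := annihilator_top_inter_nonZeroDivisors hX
  have hann : (⊤ : Submodule R X).annihilator ≠ ⊥ :=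
    (Submodule.ne_bot_iff _).mpr ⟨a, ha, nonZeroDivisors.ne_zero ha0⟩
  obtain ⟨n, hn⟩ := IsDiscreteValuationRing.ideal_eq_span_pow_irreducible hann hπ
  refine ⟨n, fun x => mem_annihilator.mp ?_ x mem_top⟩
  rw [hn]
  exact Ideal.mem_span_singleton_self _

theorem isTorsionBy_pow_modExp {R : Type*} [CommRing R] {π : R} {X : Type*} [AddCommGroup X]
    [Module R X] (h : ∃ n, IsTorsionBy R X (π ^ n)) : IsTorsionBy R X (π ^ modExp π X) :=
  fun x => Nat.sInf_mem (s := {n : ℕ | ∀ x : X, π ^ n • x = 0}) (h.imp fun _ hn x => @hn x) x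

theorem LinearMap.injective_prod_snd_comp_of_ker_eq {R X A B C : Type*} [CommRing R]
    [AddCommGroup X] [Module R X] [AddCommGroup A] [Module R A] [AddCommGroup B] [Module R B]
    [AddCommGroup C] [Module R C] {f : X →ₗ[R] A × B} (hf : Function.Injective f)
    {ψ : X →ₗ[R] C} (hψ : ker ψ = ker (fst R A B ∘ₗ f)) :
    Function.Injective ((snd R A B ∘ₗ f).prod ψ) := by
  rw [← ker_eq_bot, ker_prod, hψ, inf_comm, ← ker_prod, ← prod_comp, pair_fst_snd, id_comp,
    ker_eq_bot]
  exact hf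

theorem dvr_ses_embed_X_general
    (R : Type*) [CommRing R] [IsDomain R] [IsDiscreteValuationRing R]
    (π : R) (hπ : IsLocalRing.maximalIdeal R = Ideal.span {π})
    (X M' : Type*)
    [AddCommGroup X] [Module R X] [Module.Finite R X]
    [AddCommGroup M'] [Module R M']
    (hXtor : Module.IsTorsion R X)
    (k : ℕ)
    -- the short exact sequence (2)
    (f₂ : X →ₗ[R] (R ⧸ IsLocalRing.maximalIdeal R ^ k) × M')
    (hf₂ : Function.Injective f₂) :
    ∃ f : X →ₗ[R] M' × (R ⧸ IsLocalRing.maximalIdeal R ^ modExp π X),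
      Function.Injective f := by
  have hirr : Irreducible π := (IsDiscreteValuationRing.irreducible_iff_uniformizer π).mpr hπ
  have hX : IsTorsionBy R X (π ^ modExp π X) :=
    isTorsionBy_pow_modExp (exists_isTorsionBy_pow hirr hXtor)
  obtain ⟨ψ, hψ⟩ := exists_ker_eq_of_isTorsionBy_pow hπ hirr.ne_zero hX (fst R _ M' ∘ₗ f₂)
  exact ⟨_, injective_prod_snd_comp_of_ker_eq hf₂ hψ⟩

/-- **Proposition 4.3.6(ii) (`prop:key`(ii)).**
Given the two short exact sequences
`(1): 0 → X → R/𝔪^k ⊕ M → R/𝔪^{k−a} ⊕ R/𝔪^{b} → 0` and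
`(2): 0 → X → R/𝔪^k ⊕ M′ → R/𝔪^{a′} ⊕ R/𝔪^{k−b′} → 0`
of finitely generated torsion `R`-modules with `k > exp(M) + 2a`, `a′ ≤ a`,
`M ≅ M₀ ⊕ M₀` and `M′ ≅ M₀′ ⊕ M₀′`, there exists an injective `R`-module
homomorphism `X ↪ M′ ⊕ R/𝔪^{exp(X)}`. -/
theorem dvr_ses_embed_X
    (R : Type*) [CommRing R] [IsDomain R] [IsDiscreteValuationRing R]
    (π : R) (hπ : IsLocalRing.maximalIdeal R = Ideal.span {π})
    (X M M' M₀ M₀' : Type*)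
    [AddCommGroup X] [Module R X] [Module.Finite R X]
    [AddCommGroup M] [Module R M] [Module.Finite R M]
    [AddCommGroup M'] [Module R M'] [Module.Finite R M']
    [AddCommGroup M₀] [Module R M₀] [AddCommGroup M₀'] [Module R M₀']
    (hXtor : Module.IsTorsion R X) (hMtor : Module.IsTorsion R M)
    (hM'tor : Module.IsTorsion R M')
    (k a b a' b' : ℕ) (hk : 0 < k)
    -- the short exact sequence (1)
    (f₁ : X →ₗ[R] (R ⧸ IsLocalRing.maximalIdeal R ^ k) × M)
    (g₁ : (R ⧸ IsLocalRing.maximalIdeal R ^ k) × M →ₗ[R]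
      (R ⧸ IsLocalRing.maximalIdeal R ^ (k - a)) × (R ⧸ IsLocalRing.maximalIdeal R ^ b))
    (hf₁ : Function.Injective f₁) (hg₁ : Function.Surjective g₁)
    (hfg₁ : Function.Exact f₁ g₁)
    -- the short exact sequence (2)
    (f₂ : X →ₗ[R] (R ⧸ IsLocalRing.maximalIdeal R ^ k) × M')
    (g₂ : (R ⧸ IsLocalRing.maximalIdeal R ^ k) × M' →ₗ[R]
      (R ⧸ IsLocalRing.maximalIdeal R ^ a') × (R ⧸ IsLocalRing.maximalIdeal R ^ (k - b')))
    (hf₂ : Function.Injective f₂) (hg₂ : Function.Surjective g₂)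
    (hfg₂ : Function.Exact f₂ g₂)
    -- the numerical hypotheses
    (hka : modExp π M + 2 * a < k) (ha' : a' ≤ a)
    -- M and M' are direct sums of two isomorphic modules
    (hM₀ : Nonempty (M ≃ₗ[R] M₀ × M₀)) (hM₀' : Nonempty (M' ≃ₗ[R] M₀' × M₀')) :
    ∃ f : X →ₗ[R] M' × (R ⧸ IsLocalRing.maximalIdeal R ^ modExp π X),
      Function.Injective f :=
  dvr_ses_embed_X_general R π hπ X M' hXtor k f₂ hf₂
end

section
/- Let R be a discrete valuation ring with maximal ideal 𝔪, let X be a finitely generated torsion R-module, and let C ⊆ X be a cyclic R-submodule (generated by one element). Then there exists an injective R-module homomorphism X ↪ (X/C) ⊕ R/𝔪^{exp(X)}. -/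
/-!
Write `e = exp(X)`, so that `π ^ e` kills `X` and `X` is a module over `S = R ⧸ (π ^ e)`.
The ring `S` is self-injective: its ideals are the `(π ^ j)` with `j ≤ e`, and an element
of `S` killed by `π ^ (e - j)` is a multiple of `π ^ j`, which is Baer's criterion.
The cyclic module `C ≅ R ⧸ (π ^ c)`, `c ≤ e`, embeds into `S` by multiplication with
`π ^ (e - c)`; by injectivity this embedding extends to `φ : X → S`, and `x ↦ (x mod C, φ x)`
is injective because `φ` is injective on `C`.
-/

open Ideal Module IsDiscreteValuationRing

theorem Submodule.injective_mkQ_prod {R X M : Type*} [CommRing R] [AddCommGroup X] [Module R X]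
    [AddCommGroup M] [Module R M] {N : Submodule R X} {F : X →ₗ[R] M}
    (hF : Function.Injective (F ∘ₗ N.subtype)) : Function.Injective (N.mkQ.prod F) := by
  refine (injective_iff_map_eq_zero _).mpr fun x hx => ?_
  obtain ⟨hxN, hFx⟩ := Prod.mk_eq_zero.mp hx
  rw [Submodule.mkQ_apply, Submodule.Quotient.mk_eq_zero] at hxN
  simpa using hF (a₁ := ⟨x, hxN⟩) (a₂ := 0) (by simpa using hFx)

theorem exists_extension_of_isTorsionBySet {R X : Type*} [CommRing R] {I : Ideal R}
    (hI : Module.Baer (R ⧸ I) (R ⧸ I)) [AddCommGroup X] [Module R X]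
    (hX : IsTorsionBySet R X I)
    (N : Submodule R X) (g : N →ₗ[R] R ⧸ I) : ∃ F : X →ₗ[R] R ⧸ I, F ∘ₗ N.subtype = g := by
  let := hX.module
  let : Module (R ⧸ I) N := IsTorsionBySet.module fun x a => Subtype.ext (@hX x a)
  have hmk : Function.Surjective (algebraMap R (R ⧸ I)) := Ideal.Quotient.mk_surjective
  obtain ⟨F, hF⟩ := hI.extension_property (N.subtype.extendScalarsOfSurjective hmk)
    N.injective_subtype (g.extendScalarsOfSurjective hmk)
  exact ⟨F.restrictScalars R, LinearMap.ext fun x => LinearMap.congr_fun hF x⟩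

section Domain

variable {R : Type*} [CommRing R] [IsDomain R]

theorem pow_sub_mul_mem_span_pow_iff {π : R} (hπ : π ≠ 0) {j n : ℕ} (hjn : j ≤ n) (r : R) :
    π ^ (n - j) * r ∈ span {π ^ n} ↔ r ∈ span {π ^ j} := by
  have hn : π ^ n = π ^ (n - j) * π ^ j := by rw [← pow_add, Nat.sub_add_cancel hjn]
  simp only [mem_span_singleton, hn]
  exact mul_dvd_mul_iff_left (pow_ne_zero _ hπ)

theorem exists_injective_quotient_span_pow {π : R} (hπ : π ≠ 0) {c n : ℕ} (hcn : c ≤ n) :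
    ∃ μ : (R ⧸ span {π ^ c}) →ₗ[R] R ⧸ span {π ^ n}, Function.Injective μ := by
  have hcomap :
      Submodule.comap (LinearMap.mulLeft R (π ^ (n - c))) (span {π ^ n}) = span {π ^ c} :=
    Submodule.ext (pow_sub_mul_mem_span_pow_iff hπ hcn)
  refine ⟨Submodule.mapQ _ _ _ hcomap.ge, ?_⟩
  rw [← LinearMap.ker_eq_bot, Submodule.ker_mapQ, hcomap, Submodule.mkQ_map_self]

end Domain

section DVR

variable {R : Type*} [CommRing R] [IsDomain R] [IsDiscreteValuationRing R] {π : R}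

theorem exists_le_eq_span_pow_of_pow_mem (hπ : Irreducible π) {J : Ideal R} {n : ℕ}
    (hJ : π ^ n ∈ J) : ∃ j ≤ n, J = span {π ^ j} := by
  have hJ0 : J ≠ ⊥ := fun h => pow_ne_zero n hπ.ne_zero (by simpa [h] using hJ)
  obtain ⟨j, rfl⟩ := ideal_eq_span_pow_irreducible hJ0 hπ
  exact ⟨j, (pow_dvd_pow_iff hπ.ne_zero hπ.not_isUnit).mp (mem_span_singleton.mp hJ), rfl⟩

theorem baer_quotient_span_pow (hπ : Irreducible π) (n : ℕ) :
    Module.Baer (R ⧸ span {π ^ n}) (R ⧸ span {π ^ n}) := by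
  intro K g
  set mk := Ideal.Quotient.mk (span {π ^ n})
  have hπn : mk (π ^ n) = 0 := Ideal.Quotient.eq_zero_iff_mem.mpr (mem_span_singleton_self _)
  obtain ⟨j, hjn, hJ⟩ := exists_le_eq_span_pow_of_pow_mem hπ (J := K.comap mk) <| by
    rw [mem_comap, hπn]
    exact K.zero_mem
  have hK : K = span {mk (π ^ j)} := by
    rw [← map_comap_of_surjective mk Ideal.Quotient.mk_surjective K, hJ, map_span,
      Set.image_singleton]
  have hgen : mk (π ^ j) ∈ K := hK ▸ mem_span_singleton_self _
  obtain ⟨r, hr⟩ := Ideal.Quotient.mk_surjective (g ⟨_, hgen⟩)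
  -- `g (π^j)` is killed by `π^(n-j)`, hence is a multiple `π^j t`; the extension is `· * t`.
  have hkill : mk (π ^ (n - j) * r) = 0 := by
    rw [map_mul, hr, ← smul_eq_mul, ← map_smul]
    convert g.map_zero
    ext
    rw [Submodule.coe_smul, smul_eq_mul, ← map_mul, ← pow_add, Nat.sub_add_cancel hjn, hπn]
    rfl
  obtain ⟨t, rfl⟩ := mem_span_singleton'.mp <| (pow_sub_mul_mem_span_pow_iff hπ.ne_zero hjn r).mp
    (Ideal.Quotient.eq_zero_iff_mem.mp hkill)
  refine ⟨LinearMap.mulRight _ (mk t), fun x hx => ?_⟩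
  obtain ⟨d, rfl⟩ := mem_span_singleton'.mp (hK ▸ hx)
  have hx' : (⟨d * mk (π ^ j), hx⟩ : K) = d • ⟨_, hgen⟩ := rfl
  rw [hx', map_smul, ← hr, LinearMap.mulRight_apply, smul_eq_mul, map_mul]
  ring

variable {X : Type*} [AddCommGroup X] [Module R X]

theorem exists_isTorsionBy_pow_of_isTorsion [Module.Finite R X] (hπ : Irreducible π)
    (hX : IsTorsion R X) : ∃ n, IsTorsionBy R X (π ^ n) := by
  obtain ⟨a, ha, ha0⟩ := Submodule.annihilator_top_inter_nonZeroDivisors hX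
  obtain ⟨n, u, rfl⟩ := eq_unit_mul_pow_irreducible (nonZeroDivisors.ne_zero ha0) hπ
  refine ⟨n, fun x => ?_⟩
  simpa [mul_smul] using Submodule.mem_annihilator.mp ha x Submodule.mem_top

theorem isTorsionBy_pow_modExp_s8 [Module.Finite R X] (hπ : Irreducible π) (hX : IsTorsion R X) :
    IsTorsionBy R X (π ^ modExp π X) :=
  Nat.sInf_mem (exists_isTorsionBy_pow_of_isTorsion hπ hX)

theorem exists_injective_span_singleton_to_quotient (hπ : Irreducible π) {x : X} {n : ℕ}
    (hx : π ^ n • x = 0) : ∃ g : (R ∙ x) →ₗ[R] R ⧸ span {π ^ n}, Function.Injective g := by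
  obtain ⟨c, hcn, hc⟩ := exists_le_eq_span_pow_of_pow_mem hπ ((mem_torsionOf_iff x _).mpr hx)
  obtain ⟨μ, hμ⟩ := exists_injective_quotient_span_pow hπ.ne_zero hcn
  let e := (quotTorsionOfEquivSpanSingleton R X x).symm.trans (Submodule.quotEquivOfEq _ _ hc)
  exact ⟨μ ∘ₗ e.toLinearMap, hμ.comp e.injective⟩

end DVR

/-- Let `R` be a discrete valuation ring with maximal ideal `𝔪` and uniformizer
`π`, let `X` be a finitely generated torsion `R`-module, and let `C ⊆ X` be a
cyclic `R`-submodule. Then there exists an injective `R`-module homomorphism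
`X ↪ (X/C) ⊕ R/𝔪^{exp(X)}`. -/
theorem dvr_embed_into_quotient_of_cyclic
    (R : Type*) [CommRing R] [IsDomain R] [IsDiscreteValuationRing R]
    (π : R) (hπ : IsLocalRing.maximalIdeal R = Ideal.span {π})
    (X : Type*) [AddCommGroup X] [Module R X] [Module.Finite R X]
    (hXtor : Module.IsTorsion R X)
    (C : Submodule R X) (hC : ∃ x : X, C = Submodule.span R {x}) :
    ∃ f : X →ₗ[R] (X ⧸ C) × (R ⧸ IsLocalRing.maximalIdeal R ^ modExp π X),
      Function.Injective f := by
  obtain ⟨x, rfl⟩ := hC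
  have hirr : Irreducible π := (irreducible_iff_uniformizer π).mpr hπ
  have hX := isTorsionBy_pow_modExp_s8 hirr hXtor
  rw [hπ, span_singleton_pow]
  obtain ⟨g, hg⟩ := exists_injective_span_singleton_to_quotient hirr (@hX x)
  obtain ⟨F, rfl⟩ := exists_extension_of_isTorsionBySet (baer_quotient_span_pow hirr _)
    ((isTorsionBySet_span_singleton_iff _).mpr hX) _ g
  exact ⟨_, Submodule.injective_mkQ_prod hg⟩
end
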